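/- Termination guarantee (near-optimality certificate): let |V| = n ≥ 2, let E have m ≤ n²/2 elements, let R be an α-congestion-approximator for (B, C) with at most n²/2 rows, let b lie in the column space of B, and let 0 < ε ≤ 1/2. Define φ(f) = lmax(C⁻¹ f) + lmax(2α·R(b − B f)), g(f) = C⁻¹ ∇lmax(C⁻¹ f) − 2α·Bᵀ Rᵀ ∇lmax(2α·R(b − B f)), and v = Rᵀ ∇lmax(2α·R(b − B f)). If φ(f) ≥ 16·ε⁻¹·log n and δ := ‖C g(f)‖₁ ≤ ε/4, then (‖C⁻¹ f‖_∞ + 2α·‖R(b − B f)‖_∞) · ‖C Bᵀ v‖₁ ≤ (1 + ε)·bᵀ v. -/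
import Mathlib


open Matrix

/-- `linf x` is the maximum absolute entry of the vector `x`, i.e. `‖x‖_∞`. -/
noncomputable def linf {ι : Type*} [Fintype ι] (x : ι → ℝ) : ℝ := ⨆ i, |x i|

/-- `l1 x` is the sum of absolute entries of the vector `x`, i.e. `‖x‖₁`. -/
def l1 {ι : Type*} [Fintype ι] (x : ι → ℝ) : ℝ := ∑ i, |x i|

/-- `opt B c b` is the minimum congestion `‖C⁻¹ f‖_∞` over flows `f` with `B f = b`,
where `C` is the diagonal matrix of capacities `c`. -/
noncomputable def opt {V E : Type*} [Fintype V] [Fintype E]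
    (B : Matrix V E ℝ) (c : E → ℝ) (b : V → ℝ) : ℝ :=
  sInf {t : ℝ | ∃ f : E → ℝ, B.mulVec f = b ∧ t = linf fun e => f e / c e}

/-- `R` is an `α`-congestion-approximator for `(B, C)`:
`‖R b‖_∞ ≤ opt(b) ≤ α · ‖R b‖_∞` for every `b` in the column space of `B`. -/
def IsCongestionApprox {V E W : Type*} [Fintype V] [Fintype E] [Fintype W]
    (B : Matrix V E ℝ) (c : E → ℝ) (α : ℝ) (R : Matrix W V ℝ) : Prop :=
  ∀ b : V → ℝ, (∃ f : E → ℝ, B.mulVec f = b) →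
    linf (R.mulVec b) ≤ opt B c b ∧ opt B c b ≤ α * linf (R.mulVec b)

/-- The symmetric softmax: `lmax(x) = log (Σ_i (e^{x_i} + e^{-x_i}))`. -/
noncomputable def lmax {ι : Type*} [Fintype ι] (x : ι → ℝ) : ℝ :=
  Real.log (∑ i, (Real.exp (x i) + Real.exp (-x i)))

/-- The gradient of the symmetric softmax. -/
noncomputable def lmaxGrad {ι : Type*} [Fintype ι] (x : ι → ℝ) : ι → ℝ :=
  fun i => (Real.exp (x i) - Real.exp (-x i)) / ∑ j, (Real.exp (x j) + Real.exp (-x j))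

section Helpers

variable {ι : Type*} [Fintype ι]

lemma Zpos [Nonempty ι] (x : ι → ℝ) : 0 < ∑ j, (Real.exp (x j) + Real.exp (-x j)) :=
  Finset.sum_pos (fun j _ => by positivity) Finset.univ_nonempty

lemma abs_le_linf (x : ι → ℝ) (i : ι) : |x i| ≤ linf x :=
  le_ciSup (f := fun i => |x i|) (Set.Finite.bddAbove (Set.finite_range _)) i

lemma linf_nonneg [Nonempty ι] (x : ι → ℝ) : 0 ≤ linf x :=
  le_trans (abs_nonneg _) (abs_le_linf x (Classical.arbitrary ι))

lemma linf_le [Nonempty ι] {x : ι → ℝ} {a : ℝ} (h : ∀ i, |x i| ≤ a) : linf x ≤ a :=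
  ciSup_le h

lemma l1_nonneg (x : ι → ℝ) : 0 ≤ l1 x := Finset.sum_nonneg fun i _ => abs_nonneg _

lemma linf_const_mul [Nonempty ι] {a : ℝ} (ha : 0 ≤ a) (x : ι → ℝ) :
    linf (fun i => a * x i) = a * linf x := by
  unfold linf
  rw [Real.mul_iSup_of_nonneg ha]
  congr 1; funext i; rw [abs_mul, abs_of_nonneg ha]

lemma abs_dot_le [Nonempty ι] (x y : ι → ℝ) : |x ⬝ᵥ y| ≤ linf x * l1 y := by
  calc |x ⬝ᵥ y| ≤ ∑ i, |x i * y i| := Finset.abs_sum_le_sum_abs _ _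
    _ ≤ ∑ i, linf x * |y i| := by
        refine Finset.sum_le_sum fun i _ => ?_
        rw [abs_mul]
        exact mul_le_mul_of_nonneg_right (abs_le_linf x i) (abs_nonneg _)
    _ = linf x * l1 y := by rw [l1, Finset.mul_sum]

lemma linf_le_lmax [Nonempty ι] (x : ι → ℝ) : linf x ≤ lmax x := by
  have hZ := Zpos x
  refine linf_le fun i => ?_
  have h1 : Real.exp (x i) + Real.exp (-x i) ≤ ∑ j, (Real.exp (x j) + Real.exp (-x j)) :=
    Finset.single_le_sum (f := fun j => Real.exp (x j) + Real.exp (-x j))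
      (fun j _ => by positivity) (Finset.mem_univ i)
  have hlm : lmax x = Real.log (∑ j, (Real.exp (x j) + Real.exp (-x j))) := rfl
  rw [abs_le, hlm]
  constructor
  · rw [neg_le, ← Real.exp_le_exp (x := -x i) (y := Real.log _), Real.exp_log hZ]
    nlinarith [Real.exp_pos (x i)]
  · rw [← Real.exp_le_exp (x := x i) (y := Real.log _), Real.exp_log hZ]
    nlinarith [Real.exp_pos (-x i)]

lemma l1_lmaxGrad_le_one [Nonempty ι] (x : ι → ℝ) : l1 (lmaxGrad x) ≤ 1 := by
  have hZ := Zpos x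
  have h : l1 (lmaxGrad x) =
      (∑ i, |Real.exp (x i) - Real.exp (-x i)|) / ∑ j, (Real.exp (x j) + Real.exp (-x j)) := by
    rw [l1, Finset.sum_div]
    refine Finset.sum_congr rfl fun i _ => ?_
    rw [lmaxGrad, abs_div, abs_of_pos hZ]
  rw [h, div_le_one hZ]
  refine Finset.sum_le_sum fun i _ => ?_
  rw [abs_le]
  constructor <;> nlinarith [Real.exp_pos (x i), Real.exp_pos (-x i)]

lemma lmax_sub_log_le_dot_grad [Nonempty ι] (x : ι → ℝ) :
    lmax x - Real.log (2 * (Fintype.card ι : ℝ)) ≤ x ⬝ᵥ lmaxGrad x := by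
  have hZ := Zpos x
  set Z := ∑ j, (Real.exp (x j) + Real.exp (-x j)) with hZdef
  set d : ℝ := (Fintype.card ι : ℝ) with hd_def
  have hd : 0 < d := by
    rw [hd_def]
    exact_mod_cast Fintype.card_pos (α := ι)
  set L : ℝ := Real.log Z - Real.log (2 * d) with hL
  have key : ∀ t : ℝ, Real.exp t * (L + 1) - Z / (2 * d) ≤ t * Real.exp t := by
    intro t
    have h1 : Real.log (Z / (2 * d * Real.exp t)) ≤ Z / (2 * d * Real.exp t) - 1 :=
      Real.log_le_sub_one_of_pos (by positivity)
    have h2 : Real.log (Z / (2 * d * Real.exp t)) = L - t := by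
      rw [hL, Real.log_div (ne_of_gt hZ) (by positivity),
        Real.log_mul (by positivity) (Real.exp_ne_zero t), Real.log_exp]
      ring
    rw [h2] at h1
    have h3 := mul_le_mul_of_nonneg_left h1 (Real.exp_pos t).le
    have h4 : Real.exp t * (Z / (2 * d * Real.exp t) - 1) = Z / (2 * d) - Real.exp t := by
      field_simp
    rw [h4] at h3
    nlinarith [h3]
  have hdot : x ⬝ᵥ lmaxGrad x = (∑ i, x i * (Real.exp (x i) - Real.exp (-x i))) / Z := by
    rw [dotProduct, Finset.sum_div]
    refine Finset.sum_congr rfl fun i _ => ?_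
    rw [lmaxGrad, mul_div_assoc]
  have hsum : L * Z ≤ ∑ i, x i * (Real.exp (x i) - Real.exp (-x i)) := by
    have e1 : ∑ _i : ι, (Z / d) = Z := by
      rw [Finset.sum_const, Finset.card_univ, nsmul_eq_mul, ← hd_def]
      field_simp
    have e2 : L * Z = ∑ i, ((Real.exp (x i) + Real.exp (-x i)) * (L + 1) - Z / d) := by
      rw [Finset.sum_sub_distrib, ← Finset.sum_mul, ← hZdef, e1]
      ring
    rw [e2]
    refine Finset.sum_le_sum fun i _ => ?_
    have k1 := key (x i)
    have k2 := key (-x i)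
    have hZd : Z / d = Z / (2 * d) + Z / (2 * d) := by
      field_simp
      ring
    linarith [k1, k2]
  rw [hdot]
  rw [show lmax x - Real.log (2 * d) = L from rfl]
  rw [le_div_iff₀ hZ]
  exact hsum

end Helpers

lemma dot_transpose_mulVec {m n : Type*} [Fintype m] [Fintype n]
    (A : Matrix m n ℝ) (y : n → ℝ) (z : m → ℝ) :
    y ⬝ᵥ Aᵀ.mulVec z = A.mulVec y ⬝ᵥ z := by
  rw [Matrix.mulVec_transpose, dotProduct_comm (A.mulVec y),
    Matrix.dotProduct_mulVec, dotProduct_comm]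

set_option maxHeartbeats 1000000 in
lemma termination_aux {V E W : Type*} [Fintype V] [Fintype E] [Fintype W]
    [Nonempty V] [Nonempty E] [Nonempty W]
    (B : Matrix V E ℝ) (c : E → ℝ) (hc : ∀ e, 0 < c e)
    (α : ℝ) (hα : 1 ≤ α) (R : Matrix W V ℝ)
    (hn : 2 ≤ Fintype.card V)
    (hm : (Fintype.card E : ℝ) ≤ (Fintype.card V : ℝ) ^ 2 / 2)
    (hW : (Fintype.card W : ℝ) ≤ (Fintype.card V : ℝ) ^ 2 / 2)
    (b : V → ℝ) (ε : ℝ) (hε : 0 < ε) (hε' : ε ≤ 1 / 2) (f : E → ℝ)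
    (hφ : 16 * ε⁻¹ * Real.log (Fintype.card V) ≤
      lmax (fun e => f e / c e) + lmax (fun w => 2 * α * R.mulVec (b - B.mulVec f) w))
    (hδ : l1 (fun e => c e * (lmaxGrad (fun e' => f e' / c e') e / c e
        - 2 * α * B.transpose.mulVec (R.transpose.mulVec
            (lmaxGrad (fun w => 2 * α * R.mulVec (b - B.mulVec f) w))) e)) ≤ ε / 4) :
    (linf (fun e => f e / c e) + 2 * α * linf (R.mulVec (b - B.mulVec f))) *
        l1 (fun e => c e * B.transpose.mulVec (R.transpose.mulVec
            (lmaxGrad (fun w => 2 * α * R.mulVec (b - B.mulVec f) w))) e) ≤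
      (1 + ε) * (b ⬝ᵥ R.transpose.mulVec
          (lmaxGrad (fun w => 2 * α * R.mulVec (b - B.mulVec f) w))) := by
  set x₁ : E → ℝ := fun e => f e / c e with hx₁
  set p₁ : E → ℝ := lmaxGrad x₁ with hp₁
  set x₂ : W → ℝ := fun w => 2 * α * R.mulVec (b - B.mulVec f) w with hx₂
  set p₂ : W → ℝ := lmaxGrad x₂ with hp₂
  set v : V → ℝ := R.transpose.mulVec p₂ with hv
  set g : E → ℝ := fun e => p₁ e / c e - 2 * α * B.transpose.mulVec v e with hg
  have hδ' : l1 (fun e => c e * g e) ≤ ε / 4 := hδ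
  set n : ℝ := (Fintype.card V : ℝ) with hn_def
  have hn2 : (2 : ℝ) ≤ n := by rw [hn_def]; exact_mod_cast hn
  have hlogn : 0 < Real.log n := Real.log_pos (by linarith)
  have hα0 : (0 : ℝ) < α := lt_of_lt_of_le one_pos hα
  have h2α : (0 : ℝ) < 2 * α := by linarith
  have hm1 : (1 : ℝ) ≤ (Fintype.card E : ℝ) := by exact_mod_cast Fintype.card_pos (α := E)
  have hk1 : (1 : ℝ) ≤ (Fintype.card W : ℝ) := by exact_mod_cast Fintype.card_pos (α := W)
  set φ : ℝ := lmax x₁ + lmax x₂ with hφdef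
  have hφ0 : 0 < φ :=
    lt_of_lt_of_le (mul_pos (mul_pos (by norm_num) (inv_pos.mpr hε)) hlogn) hφ
  -- gradient inequalities
  have hg1 : lmax x₁ - Real.log (2 * (Fintype.card E : ℝ)) ≤ x₁ ⬝ᵥ p₁ :=
    lmax_sub_log_le_dot_grad x₁
  have hg2 : lmax x₂ - Real.log (2 * (Fintype.card W : ℝ)) ≤ x₂ ⬝ᵥ p₂ :=
    lmax_sub_log_le_dot_grad x₂
  -- identities
  have hA : f ⬝ᵥ g = x₁ ⬝ᵥ p₁ - 2 * α * (B.mulVec f ⬝ᵥ v) := by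
    rw [← dot_transpose_mulVec B f v]
    simp only [dotProduct, hg, hx₁, Finset.mul_sum, ← Finset.sum_sub_distrib]
    exact Finset.sum_congr rfl fun e _ => by ring
  have hB2 : x₂ ⬝ᵥ p₂ = 2 * α * ((b - B.mulVec f) ⬝ᵥ v) := by
    have h1 : x₂ ⬝ᵥ p₂ = 2 * α * (R.mulVec (b - B.mulVec f) ⬝ᵥ p₂) := by
      simp only [dotProduct, hx₂, Finset.mul_sum]
      exact Finset.sum_congr rfl fun w _ => by ring
    rw [h1, ← dot_transpose_mulVec R (b - B.mulVec f) p₂, ← hv]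
  have hkey : x₁ ⬝ᵥ p₁ + x₂ ⬝ᵥ p₂ = f ⬝ᵥ g + 2 * α * (b ⬝ᵥ v) := by
    rw [hA, hB2, sub_dotProduct]
    ring
  -- bound on f ⬝ᵥ g
  have hfg_eq : f ⬝ᵥ g = x₁ ⬝ᵥ (fun e => c e * g e) := by
    simp only [dotProduct, hx₁]
    refine Finset.sum_congr rfl fun e _ => ?_
    field_simp [(hc e).ne']
  have hlm2 : 0 ≤ lmax x₂ := le_trans (linf_nonneg x₂) (linf_le_lmax x₂)
  have hlm1 : 0 ≤ lmax x₁ := le_trans (linf_nonneg x₁) (linf_le_lmax x₁)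
  have hx1φ : linf x₁ ≤ φ := by
    have := linf_le_lmax x₁; rw [hφdef]; linarith
  have hfg : f ⬝ᵥ g ≤ φ * (ε / 4) := by
    have h1 : f ⬝ᵥ g ≤ linf x₁ * l1 (fun e => c e * g e) :=
      le_trans (le_abs_self _) (by rw [hfg_eq]; exact abs_dot_le _ _)
    have h2 : linf x₁ * l1 (fun e => c e * g e) ≤ linf x₁ * (ε / 4) :=
      mul_le_mul_of_nonneg_left hδ' (linf_nonneg x₁)
    have h3 : linf x₁ * (ε / 4) ≤ φ * (ε / 4) :=
      mul_le_mul_of_nonneg_right hx1φ (by linarith)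
    linarith
  -- log bounds
  have hD1 : Real.log (2 * (Fintype.card E : ℝ)) ≤ 2 * Real.log n := by
    have h2m : 2 * (Fintype.card E : ℝ) ≤ n ^ 2 := by rw [hn_def]; linarith [hm]
    calc Real.log (2 * (Fintype.card E : ℝ)) ≤ Real.log (n ^ 2) :=
          (Real.log_le_log_iff (by linarith) (by nlinarith)).mpr h2m
      _ = 2 * Real.log n := by rw [Real.log_pow]; norm_num
  have hD2 : Real.log (2 * (Fintype.card W : ℝ)) ≤ 2 * Real.log n := by
    have h2k : 2 * (Fintype.card W : ℝ) ≤ n ^ 2 := by rw [hn_def]; linarith [hW]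
    calc Real.log (2 * (Fintype.card W : ℝ)) ≤ Real.log (n ^ 2) :=
          (Real.log_le_log_iff (by linarith) (by nlinarith)).mpr h2k
      _ = 2 * Real.log n := by rw [Real.log_pow]; norm_num
  have hD01 : 0 ≤ Real.log (2 * (Fintype.card E : ℝ)) := Real.log_nonneg (by linarith)
  have hD02 : 0 ≤ Real.log (2 * (Fintype.card W : ℝ)) := Real.log_nonneg (by linarith)
  set D : ℝ := Real.log (2 * (Fintype.card E : ℝ)) + Real.log (2 * (Fintype.card W : ℝ))
    with hDdef
  have hD : D ≤ 4 * Real.log n := by rw [hDdef]; linarith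
  have hD0 : 0 ≤ D := by rw [hDdef]; linarith
  -- lower bound for b ⬝ᵥ v
  have hbv : φ - D - φ * (ε / 4) ≤ 2 * α * (b ⬝ᵥ v) := by
    have : φ - D ≤ f ⬝ᵥ g + 2 * α * (b ⬝ᵥ v) := by
      rw [← hkey, hφdef, hDdef]; linarith [hg1, hg2]
    linarith [hfg]
  -- bound on l1 (C Bᵀ v)
  have hCB : (fun e => c e * B.transpose.mulVec v e) =
      fun e => (p₁ e - c e * g e) / (2 * α) := by
    funext e
    rw [hg]
    field_simp [(hc e).ne']
    ring
  have hT : l1 (fun e => c e * B.transpose.mulVec v e) ≤ (1 + ε / 4) / (2 * α) := by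
    rw [hCB]
    have e1 : l1 (fun e => (p₁ e - c e * g e) / (2 * α)) =
        (∑ e, |p₁ e - c e * g e|) / (2 * α) := by
      rw [l1, Finset.sum_div]
      exact Finset.sum_congr rfl fun e _ => by rw [abs_div, abs_of_pos h2α]
    rw [e1]
    have e2 : ∑ e, |p₁ e - c e * g e| ≤ 1 + ε / 4 := by
      have h3 : ∑ e, |p₁ e - c e * g e| ≤ ∑ e, (|p₁ e| + |c e * g e|) :=
        Finset.sum_le_sum fun e _ => abs_sub _ _
      rw [Finset.sum_add_distrib] at h3
      have h4 : l1 p₁ ≤ 1 := l1_lmaxGrad_le_one x₁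
      rw [l1] at h4
      have h5 := hδ'
      rw [l1] at h5
      calc ∑ e, |p₁ e - c e * g e| ≤ (∑ e, |p₁ e|) + ∑ e, |c e * g e| := h3
        _ ≤ 1 + ε / 4 := by exact add_le_add h4 h5
    gcongr
  -- first factor bounds
  have hx2linf : linf x₂ = 2 * α * linf (R.mulVec (b - B.mulVec f)) := by
    rw [hx₂]; exact linf_const_mul h2α.le _
  have hs : linf x₁ + 2 * α * linf (R.mulVec (b - B.mulVec f)) ≤ φ := by
    rw [hφdef, ← hx2linf]; linarith [linf_le_lmax x₁, linf_le_lmax x₂]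
  -- arithmetic
  have hεφ : 16 * Real.log n ≤ ε * φ := by
    have h := mul_le_mul_of_nonneg_left hφ hε.le
    have e : ε * (16 * ε⁻¹ * Real.log n) = 16 * Real.log n := by field_simp
    rw [e] at h; exact h
  have harith1 : 6 * Real.log n ≤ φ * (ε / 2 - ε ^ 2 / 4) := by
    have ha : (0:ℝ) ≤ 1 / 2 - ε / 4 := by linarith
    have hb := mul_le_mul_of_nonneg_right hεφ ha
    nlinarith [hb, mul_le_mul_of_nonneg_left hε' hlogn.le]
  have harith2 : (1 + ε) * D ≤ 6 * Real.log n := by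
    nlinarith [mul_le_mul_of_nonneg_right hε' hD0, hD]
  have hmain : φ * (1 + ε / 4) ≤ (1 + ε) * (φ - D - φ * (ε / 4)) := by
    nlinarith [harith1, harith2]
  have h3 : φ * (1 + ε / 4) ≤ (1 + ε) * (2 * α * (b ⬝ᵥ v)) :=
    le_trans hmain (mul_le_mul_of_nonneg_left hbv (by linarith))
  calc (linf x₁ + 2 * α * linf (R.mulVec (b - B.mulVec f))) *
        l1 (fun e => c e * B.transpose.mulVec v e)
      ≤ φ * ((1 + ε / 4) / (2 * α)) := mul_le_mul hs hT (l1_nonneg _) hφ0.le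
    _ ≤ (1 + ε) * (b ⬝ᵥ v) := by
        rw [show φ * ((1 + ε / 4) / (2 * α)) = φ * (1 + ε / 4) / (2 * α) from by ring,
          div_le_iff₀ h2α]
        nlinarith [h3]

/-- Termination guarantee (near-optimality certificate): if
`φ(f) ≥ 16 ε⁻¹ log n` and `δ = ‖C g(f)‖₁ ≤ ε/4`, then the potentials
`v = Rᵀ ∇lmax(2α R(b − B f))` certify
`(‖C⁻¹ f‖_∞ + 2α ‖R(b − B f)‖_∞) · ‖C Bᵀ v‖₁ ≤ (1 + ε) bᵀ v`. -/
theorem termination_certificate {V E W : Type*} [Fintype V] [Fintype E] [Fintype W]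
    [Nonempty V] [Nonempty E]
    (B : Matrix V E ℝ) (c : E → ℝ) (hc : ∀ e, 0 < c e)
    (α : ℝ) (hα : 1 ≤ α) (R : Matrix W V ℝ)
    (hR : IsCongestionApprox B c α R)
    (hn : 2 ≤ Fintype.card V)
    (hm : (Fintype.card E : ℝ) ≤ (Fintype.card V : ℝ) ^ 2 / 2)
    (hW : (Fintype.card W : ℝ) ≤ (Fintype.card V : ℝ) ^ 2 / 2)
    (b : V → ℝ) (hb : ∃ f : E → ℝ, B.mulVec f = b)
    (ε : ℝ) (hε : 0 < ε) (hε' : ε ≤ 1 / 2)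
    (f : E → ℝ) :
    let φ : ℝ :=
      lmax (fun e => f e / c e) + lmax (fun w => 2 * α * R.mulVec (b - B.mulVec f) w)
    let p₂ : W → ℝ := lmaxGrad (fun w => 2 * α * R.mulVec (b - B.mulVec f) w)
    let g : E → ℝ := fun e =>
      lmaxGrad (fun e' => f e' / c e') e / c e
        - 2 * α * B.transpose.mulVec (R.transpose.mulVec p₂) e
    let δ : ℝ := l1 (fun e => c e * g e)
    let v : V → ℝ := R.transpose.mulVec p₂
    16 * ε⁻¹ * Real.log (Fintype.card V) ≤ φ → δ ≤ ε / 4 →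
      (linf (fun e => f e / c e) + 2 * α * linf (R.mulVec (b - B.mulVec f))) *
          l1 (fun e => c e * B.transpose.mulVec v e) ≤
        (1 + ε) * (b ⬝ᵥ v) := by
  intro φ p₂ g δ v hφ hδ
  rcases isEmpty_or_nonempty W with hWe | hWne
  · have hv : v = (0 : V → ℝ) := by
      funext i
      show (R.transpose.mulVec p₂) i = 0
      simp [Matrix.mulVec, dotProduct]
    rw [hv]
    simp [l1, Matrix.mulVec_zero]
  · exact termination_aux B c hc α hα R hn hm hW b ε hε hε' f hφ hδ
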